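/- arXiv:math/0110311 — 5 statements merged into one kernel-verified Lean document; each statement's English description precedes it below -/
import Mathlib

section
/- In the category of vector spaces over a field k with direct sum ⊕ as monoidal product, a linear map δ : A → A ⊕ A given by δ(a) = (f(a), g(a)) is coassociative if and only if f ∘ f = f, g ∘ g = g, and f ∘ g = g ∘ f; i.e., cosemigroup structures on A correspond to pairs of commuting idempotent endomorphisms. -/
/-- In `Vect_k` with the direct sum as monoidal product, the linear map
`δ : A → A ⊕ A`, `δ a = (f a, g a)`, is coassociative if and only if
`f` and `g` are commuting idempotent endomorphisms. -/
theorem directSum_cosemigroup_iff {k : Type*} [Field k] {A : Type*}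
    [AddCommGroup A] [Module k A] (f g : A →ₗ[k] A) :
    (∀ a : A, ((f a, (f (g a), g (g a))) : A × (A × A)) =
      (f (f a), (g (f a), g a)))
    ↔ (f ∘ₗ f = f ∧ g ∘ₗ g = g ∧ f ∘ₗ g = g ∘ₗ f) := by
  constructor
  · intro h
    refine ⟨?_, ?_, ?_⟩ <;> ext a <;> have := Prod.mk.injEq .. ▸ h a <;>
      simp only [Prod.mk.injEq] at this <;> simp [LinearMap.comp_apply]
    · exact this.1.symm
    · exact this.2.2
    · exact this.2.1
  · rintro ⟨hf, hg, hfg⟩ a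
    have h1 := congrFun (congrArg DFunLike.coe hf) a
    have h2 := congrFun (congrArg DFunLike.coe hg) a
    have h3 := congrFun (congrArg DFunLike.coe hfg) a
    simp only [LinearMap.comp_apply] at h1 h2 h3
    simp [h1, h2, h3]
end

section
/- Let (C, ⊗, e, α, β, γ, σ) be a symmetric monoidal category, A a commutative comonoid, and r : B → A ⊗ A a morphism of comonoids (a relation on A) where B carries a comonoid structure (δ_B, ε_B). Define δ^l = (γ_A ⊗ 1_B) ∘ ((1_A ⊗ ε_A) ⊗ 1_B) ∘ (r ⊗ 1_B) ∘ δ_B and δ^r = (1_B ⊗ β_A) ∘ (1_B ⊗ (ε_A ⊗ 1_A)) ∘ (1_B ⊗ r) ∘ δ_B. Then {δ^l, δ^r} makes B an A-A bicomodule: δ^l is a coassociative counital left A-coaction, δ^r a coassociative counital right A-coaction, and the two coactions commute: (δ^l ⊗ 1_A) ∘ δ^r = α_{A,B,A}^{-1} ∘ (1_A ⊗ δ^r) ∘ δ^l (up to associators). -/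
/-! Write `π₁ = r ≫ A ◁ ε_A ≫ ρ_A` and `π₂ = r ≫ ε_A ▷ A ≫ λ_A`, so that `δ^l = δ_B ≫ π₁ ▷ B` and
`δ^r = δ_B ≫ B ◁ π₂`. In a C-category every morphism preserves the diagonals and counits, so
counitality of both coactions is counitality of `δ_B`, while both coassociativity laws and the
commutation law are coassociativity of `δ_B` followed by a tensor product of three maps out
of `B` (`CStructure.coassoc_tensorHom`). -/

open CategoryTheory MonoidalCategory

variable {C : Type*} [Category C] [MonoidalCategory C] [SymmetricCategory C]

/-- A C-category structure on a symmetric monoidal category: every object carries a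
fixed cocommutative comonoid structure, naturally in the object and compatibly with
the tensor product. -/
structure CStructure (C : Type*) [Category C] [MonoidalCategory C]
    [SymmetricCategory C] where
  δ : ∀ X : C, X ⟶ X ⊗ X
  ε : ∀ X : C, X ⟶ 𝟙_ C
  coassoc : ∀ X : C, δ X ≫ (X ◁ δ X) ≫ (α_ X X X).inv = δ X ≫ (δ X ▷ X)
  counit_left : ∀ X : C, δ X ≫ (ε X ▷ X) ≫ (λ_ X).hom = 𝟙 X
  counit_right : ∀ X : C, δ X ≫ (X ◁ ε X) ≫ (ρ_ X).hom = 𝟙 X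
  cocomm : ∀ X : C, δ X ≫ (β_ X X).hom = δ X
  δ_natural : ∀ {X Y : C} (f : X ⟶ Y), f ≫ δ Y = δ X ≫ (f ⊗ₘ f)
  ε_natural : ∀ {X Y : C} (f : X ⟶ Y), f ≫ ε Y = ε X
  δ_tensor : ∀ X Y : C, δ (X ⊗ Y) =
    (δ X ⊗ₘ δ Y) ≫ (α_ X X (Y ⊗ Y)).hom ≫ (X ◁ (α_ X Y Y).inv) ≫
      (X ◁ ((β_ X Y).hom ▷ Y)) ≫ (X ◁ (α_ Y X Y).hom) ≫ (α_ X Y (X ⊗ Y)).inv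
  ε_tensor : ∀ X Y : C, ε (X ⊗ Y) = (ε X ⊗ₘ ε Y) ≫ (λ_ (𝟙_ C)).hom

/-- `(dl, dr)` is an `A-A` bicomodule structure on `B`: `dl` is a coassociative
counital left `A`-coaction, `dr` a coassociative counital right `A`-coaction, and
the two coactions commute (up to associators). -/
def IsBicomodule (A : C) (δA : A ⟶ A ⊗ A) (εA : A ⟶ 𝟙_ C)
    (B : C) (dl : B ⟶ A ⊗ B) (dr : B ⟶ B ⊗ A) : Prop :=
  (dl ≫ (A ◁ dl) ≫ (α_ A A B).inv = dl ≫ (δA ▷ B)) ∧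
  (dl ≫ (εA ▷ B) ≫ (λ_ B).hom = 𝟙 B) ∧
  (dr ≫ (B ◁ δA) ≫ (α_ B A A).inv = dr ≫ (dr ▷ A)) ∧
  (dr ≫ (B ◁ εA) ≫ (ρ_ B).hom = 𝟙 B) ∧
  (dr ≫ (dl ▷ A) = dl ≫ (A ◁ dr) ≫ (α_ A B A).inv)

namespace CStructure

variable (S : CStructure C) {A B : C}

def leftCoaction (f : B ⟶ A) : B ⟶ A ⊗ B := S.δ B ≫ f ▷ B

def rightCoaction (g : B ⟶ A) : B ⟶ B ⊗ A := S.δ B ≫ B ◁ g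

lemma coassoc_tensorHom {X Y Z W : C} (f : X ⟶ Y) (g : X ⟶ Z) (h : X ⟶ W) :
    S.δ X ≫ S.δ X ▷ X ≫ ((f ⊗ₘ g) ⊗ₘ h) =
      S.δ X ≫ X ◁ S.δ X ≫ (f ⊗ₘ (g ⊗ₘ h)) ≫ (α_ Y Z W).inv := by
  rw [associator_inv_naturality, reassoc_of% (S.coassoc X)]

lemma leftCoaction_coassoc (f : B ⟶ A) :
    S.leftCoaction f ≫ A ◁ S.leftCoaction f ≫ (α_ A A B).inv =
      S.leftCoaction f ≫ S.δ A ▷ B := by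
  calc _ = S.δ B ≫ B ◁ S.δ B ≫ (f ⊗ₘ (f ⊗ₘ 𝟙 B)) ≫ (α_ A A B).inv := by
        simp only [leftCoaction, MonoidalCategory.whiskerLeft_comp, MonoidalCategory.tensorHom_def,
          MonoidalCategory.whiskerLeft_id, Category.comp_id, Category.assoc]
        rw [whisker_exchange_assoc]
    _ = S.δ B ≫ S.δ B ▷ B ≫ ((f ⊗ₘ f) ⊗ₘ 𝟙 B) := (S.coassoc_tensorHom ..).symm
    _ = _ := by
        rw [leftCoaction, tensorHom_id, ← comp_whiskerRight, ← S.δ_natural, comp_whiskerRight,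
          Category.assoc]

lemma leftCoaction_counit (f : B ⟶ A) :
    S.leftCoaction f ≫ S.ε A ▷ B ≫ (λ_ B).hom = 𝟙 B := by
  rw [leftCoaction, Category.assoc, ← comp_whiskerRight_assoc, S.ε_natural, S.counit_left]

lemma rightCoaction_coassoc (g : B ⟶ A) :
    S.rightCoaction g ≫ B ◁ S.δ A ≫ (α_ B A A).inv =
      S.rightCoaction g ≫ S.rightCoaction g ▷ A := by
  calc _ = S.δ B ≫ B ◁ S.δ B ≫ (𝟙 B ⊗ₘ (g ⊗ₘ g)) ≫ (α_ B A A).inv := by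
        rw [rightCoaction, Category.assoc, ← MonoidalCategory.whiskerLeft_comp_assoc, S.δ_natural,
          MonoidalCategory.whiskerLeft_comp_assoc, id_tensorHom]
    _ = S.δ B ≫ S.δ B ▷ B ≫ ((𝟙 B ⊗ₘ g) ⊗ₘ g) := (S.coassoc_tensorHom ..).symm
    _ = _ := by
        rw [rightCoaction, id_tensorHom, tensorHom_def', comp_whiskerRight, ← whisker_exchange_assoc]
        simp only [Category.assoc]

lemma rightCoaction_counit (g : B ⟶ A) :
    S.rightCoaction g ≫ B ◁ S.ε A ≫ (ρ_ B).hom = 𝟙 B := by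
  rw [rightCoaction, Category.assoc, ← MonoidalCategory.whiskerLeft_comp_assoc, S.ε_natural,
    S.counit_right]

lemma leftCoaction_rightCoaction_comm (f g : B ⟶ A) :
    S.rightCoaction g ≫ S.leftCoaction f ▷ A =
      S.leftCoaction f ≫ A ◁ S.rightCoaction g ≫ (α_ A B A).inv := by
  calc _ = S.δ B ≫ S.δ B ▷ B ≫ ((f ⊗ₘ 𝟙 B) ⊗ₘ g) := by
        simp only [rightCoaction, leftCoaction, tensorHom_def', MonoidalCategory.whiskerLeft_id,
          Category.id_comp, comp_whiskerRight, Category.assoc]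
        rw [whisker_exchange_assoc]
    _ = S.δ B ≫ B ◁ S.δ B ≫ (f ⊗ₘ (𝟙 B ⊗ₘ g)) ≫ (α_ A B A).inv :=
        S.coassoc_tensorHom ..
    _ = _ := by
        simp only [rightCoaction, leftCoaction, MonoidalCategory.tensorHom_def,
          MonoidalCategory.id_whiskerRight, Category.id_comp, MonoidalCategory.whiskerLeft_comp,
          Category.assoc]
        rw [whisker_exchange_assoc]

theorem isBicomodule_leftCoaction_rightCoaction (f g : B ⟶ A) :
    IsBicomodule A (S.δ A) (S.ε A) B (S.leftCoaction f) (S.rightCoaction g) :=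
  ⟨S.leftCoaction_coassoc f, S.leftCoaction_counit f, S.rightCoaction_coassoc g,
    S.rightCoaction_counit g, S.leftCoaction_rightCoaction_comm f g⟩

end CStructure

/-- In a C-category, any relation `r : B ⟶ A ⊗ A` on `A` induces an `A-A` bicomodule
structure `(δ^l, δ^r)` on `B`, where
`δ^l = (γ_A ⊗ 1_B) ∘ ((1_A ⊗ ε_A) ⊗ 1_B) ∘ (r ⊗ 1_B) ∘ δ_B` and
`δ^r = (1_B ⊗ β_A) ∘ (1_B ⊗ (ε_A ⊗ 1_A)) ∘ (1_B ⊗ r) ∘ δ_B`. -/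
theorem relation_isBicomodule (S : CStructure C) (A B : C) (r : B ⟶ A ⊗ A) :
    IsBicomodule A (S.δ A) (S.ε A) B
      (S.δ B ≫ (r ▷ B) ≫ ((A ◁ S.ε A) ▷ B) ≫ ((ρ_ A).hom ▷ B))
      (S.δ B ≫ (B ◁ r) ≫ (B ◁ (S.ε A ▷ A)) ≫ (B ◁ (λ_ A).hom)) := by
  simpa only [CStructure.leftCoaction, CStructure.rightCoaction, comp_whiskerRight,
    MonoidalCategory.whiskerLeft_comp] using
    S.isBicomodule_leftCoaction_rightCoaction (r ≫ A ◁ S.ε A ≫ (ρ_ A).hom)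
      (r ≫ S.ε A ▷ A ≫ (λ_ A).hom)
end

section
/- With notation as in the bicomodule construction from a relation: the categories R^A(C) of relations on A and S^A(C) of A-A bicomodules are isomorphic. Explicitly, the functor Φ sending a relation r : B → A ⊗ A to the bicomodule (δ^l, δ^r) and the functor Ψ sending a bicomodule (δ^l, δ^r) on B to r = (1_A ⊗ β_A) ∘ (1_A ⊗ (ε_B ⊗ 1_A)) ∘ (1_A ⊗ δ^r) ∘ δ^l are mutually inverse: Ψ ∘ Φ = id and Φ ∘ Ψ = id. -/
open CategoryTheory MonoidalCategory

variable {C : Type*} [Category C] [MonoidalCategory C] [SymmetricCategory C]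

/-- The left coaction `Φ(r)^l` induced by a relation `r : B ⟶ A ⊗ A`. -/
def PhiL (S : CStructure C) (A B : C) (r : B ⟶ A ⊗ A) : B ⟶ A ⊗ B :=
  S.δ B ≫ (r ▷ B) ≫ ((A ◁ S.ε A) ▷ B) ≫ ((ρ_ A).hom ▷ B)

/-- The right coaction `Φ(r)^r` induced by a relation `r : B ⟶ A ⊗ A`. -/
def PhiR (S : CStructure C) (A B : C) (r : B ⟶ A ⊗ A) : B ⟶ B ⊗ A :=
  S.δ B ≫ (B ◁ r) ≫ (B ◁ (S.ε A ▷ A)) ≫ (B ◁ (λ_ A).hom)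

/-- The relation `Ψ(δ^l, δ^r) = (1_A ⊗ β_A) ∘ (1_A ⊗ (ε_B ⊗ 1_A)) ∘ (1_A ⊗ δ^r) ∘ δ^l`
induced by an `A-A` bicomodule structure on `B`. -/
def Psi (S : CStructure C) (A B : C) (dl : B ⟶ A ⊗ B) (dr : B ⟶ B ⊗ A) :
    B ⟶ A ⊗ A :=
  dl ≫ (A ◁ dr) ≫ (A ◁ (S.ε B ▷ A)) ≫ (A ◁ (λ_ A).hom)

/-!
In a C-category the maps `fst = (1 ⊗ ε) ≫ ρ : X ⊗ Y ⟶ X` and `snd = (ε ⊗ 1) ≫ λ : X ⊗ Y ⟶ Y`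
are jointly monic: naturality of `δ` and its compatibility with `⊗` give
`f = δ ≫ ((f ≫ fst) ⊗ (f ≫ snd))` for every `f : Z ⟶ X ⊗ Y`. So it suffices to compare
projections. `Φ(r)^l` has projections `r ≫ fst` and `1`, `Φ(r)^r` has `1` and `r ≫ snd`, and
`Ψ(δ^l, δ^r)` has `δ^l ≫ fst` and `(δ^l ≫ snd) ≫ δ^r ≫ snd`; the counit laws of a bicomodule
say `δ^l ≫ snd = 1` and `δ^r ≫ fst = 1`.
-/

namespace CStructure

variable (S : CStructure C)

def fst (X Y : C) : X ⊗ Y ⟶ X := (X ◁ S.ε Y) ≫ (ρ_ X).hom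

def snd (X Y : C) : X ⊗ Y ⟶ Y := (S.ε X ▷ Y) ≫ (λ_ Y).hom

theorem δ_fst (X : C) : S.δ X ≫ S.fst X X = 𝟙 X := S.counit_right X

theorem δ_snd (X : C) : S.δ X ≫ S.snd X X = 𝟙 X := S.counit_left X

theorem whiskerLeft_fst {X Y Y' : C} (g : Y ⟶ Y') : (X ◁ g) ≫ S.fst X Y' = S.fst X Y := by
  rw [fst, fst, ← whiskerLeft_comp_assoc, S.ε_natural]

theorem whiskerLeft_snd {X Y Y' : C} (g : Y ⟶ Y') :
    (X ◁ g) ≫ S.snd X Y' = S.snd X Y ≫ g := by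
  rw [snd, snd, whisker_exchange_assoc, leftUnitor_naturality, Category.assoc]

theorem whiskerRight_fst {X X' Y : C} (f : X ⟶ X') :
    (f ▷ Y) ≫ S.fst X' Y = S.fst X Y ≫ f := by
  rw [fst, fst, ← whisker_exchange_assoc, rightUnitor_naturality, Category.assoc]

theorem whiskerRight_snd {X X' Y : C} (f : X ⟶ X') : (f ▷ Y) ≫ S.snd X' Y = S.snd X Y := by
  rw [snd, snd, ← comp_whiskerRight_assoc, S.ε_natural]

-- The left-hand composite starts with the interchange
-- `(X ⊗ X) ⊗ (Y ⊗ Y) ≅ (X ⊗ Y) ⊗ (X ⊗ Y)` of `δ_tensor`.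
theorem shuffle_fst_tensor_snd (X Y : C) :
    (α_ X X (Y ⊗ Y)).hom ≫ (X ◁ (α_ X Y Y).inv) ≫ (X ◁ ((β_ X Y).hom ▷ Y)) ≫
      (X ◁ (α_ Y X Y).hom) ≫ (α_ X Y (X ⊗ Y)).inv ≫ (S.fst X Y ⊗ₘ S.snd X Y) =
    S.fst X X ⊗ₘ S.snd Y Y := by
  simp only [fst, snd, MonoidalCategory.tensorHom_def, whiskerRight_tensor, comp_whiskerRight,
    whisker_assoc, Category.assoc, triangle_assoc_comp_right, leftUnitor_whiskerRight,
    whiskerLeft_comp, Iso.inv_hom_id_assoc, Iso.inv_hom_id, Category.comp_id,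
    pentagon_inv_hom_hom_hom_inv_assoc, whiskerLeft_hom_inv_assoc, Iso.cancel_iso_hom_left]
  simp only [← whiskerLeft_comp]
  congr 1
  slice_lhs 2 3 => rw [← comp_whiskerRight, ← BraidedCategory.braiding_naturality_right,
    comp_whiskerRight]
  simp only [whisker_assoc, braiding_tensorUnit_right, comp_whiskerRight,
    leftUnitor_inv_whiskerRight, Category.assoc, triangle_assoc_comp_right_assoc, Iso.inv_hom_id,
    Category.comp_id, Iso.inv_hom_id_assoc]
  slice_lhs 1 2 => rw [← whiskerLeft_comp]
  slice_lhs 1 2 => rw [whisker_exchange]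
  slice_lhs 2 3 => rw [leftUnitor_naturality]
  slice_rhs 2 3 => rw [associator_naturality_left]
  simp

theorem δ_tensor_fst_tensor_snd (X Y : C) :
    S.δ (X ⊗ Y) ≫ (S.fst X Y ⊗ₘ S.snd X Y) = 𝟙 (X ⊗ Y) := by
  simp only [S.δ_tensor, Category.assoc, shuffle_fst_tensor_snd, tensorHom_comp_tensorHom,
    δ_fst, δ_snd, id_tensorHom_id]

theorem hom_ext {Z X Y : C} {f g : Z ⟶ X ⊗ Y} (h₁ : f ≫ S.fst X Y = g ≫ S.fst X Y)
    (h₂ : f ≫ S.snd X Y = g ≫ S.snd X Y) : f = g := by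
  have lift (k : Z ⟶ X ⊗ Y) : S.δ Z ≫ ((k ≫ S.fst X Y) ⊗ₘ (k ≫ S.snd X Y)) = k := by
    rw [← tensorHom_comp_tensorHom, ← Category.assoc, ← S.δ_natural, Category.assoc,
      δ_tensor_fst_tensor_snd, Category.comp_id]
  rw [← lift f, ← lift g, h₁, h₂]

end CStructure

section

variable (S : CStructure C) {A B : C}

theorem PhiL_eq (r : B ⟶ A ⊗ A) : PhiL S A B r = S.δ B ≫ ((r ≫ S.fst A A) ▷ B) := by
  simp only [PhiL, CStructure.fst, comp_whiskerRight]

theorem PhiR_eq (r : B ⟶ A ⊗ A) : PhiR S A B r = S.δ B ≫ (B ◁ (r ≫ S.snd A A)) := by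
  simp only [PhiR, CStructure.snd, whiskerLeft_comp]

theorem Psi_eq (dl : B ⟶ A ⊗ B) (dr : B ⟶ B ⊗ A) :
    Psi S A B dl dr = dl ≫ (A ◁ (dr ≫ S.snd B A)) := by
  simp only [Psi, CStructure.snd, whiskerLeft_comp]

theorem PhiL_fst (r : B ⟶ A ⊗ A) : PhiL S A B r ≫ S.fst A B = r ≫ S.fst A A := by
  rw [PhiL_eq, Category.assoc, S.whiskerRight_fst, reassoc_of% S.δ_fst]

theorem PhiL_snd (r : B ⟶ A ⊗ A) : PhiL S A B r ≫ S.snd A B = 𝟙 B := by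
  rw [PhiL_eq, Category.assoc, S.whiskerRight_snd, S.δ_snd]

theorem PhiR_fst (r : B ⟶ A ⊗ A) : PhiR S A B r ≫ S.fst B A = 𝟙 B := by
  rw [PhiR_eq, Category.assoc, S.whiskerLeft_fst, S.δ_fst]

theorem PhiR_snd (r : B ⟶ A ⊗ A) : PhiR S A B r ≫ S.snd B A = r ≫ S.snd A A := by
  rw [PhiR_eq, Category.assoc, S.whiskerLeft_snd, reassoc_of% S.δ_snd]

theorem Psi_fst (dl : B ⟶ A ⊗ B) (dr : B ⟶ B ⊗ A) :
    Psi S A B dl dr ≫ S.fst A A = dl ≫ S.fst A B := by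
  rw [Psi_eq, Category.assoc, S.whiskerLeft_fst]

theorem Psi_snd (dl : B ⟶ A ⊗ B) (dr : B ⟶ B ⊗ A) :
    Psi S A B dl dr ≫ S.snd A A = (dl ≫ S.snd A B) ≫ dr ≫ S.snd B A := by
  rw [Psi_eq, Category.assoc, S.whiskerLeft_snd, Category.assoc]

end

/-- The categories of relations on `A` and of `A-A` bicomodules are isomorphic:
`Φ` and `Ψ` (which are the identity on underlying arrows) are mutually inverse,
i.e. `Ψ ∘ Φ = id` on relations and `Φ ∘ Ψ = id` on bicomodules. -/
theorem phi_psi_inverse (S : CStructure C) (A B : C) :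
    (∀ r : B ⟶ A ⊗ A, Psi S A B (PhiL S A B r) (PhiR S A B r) = r) ∧
    (∀ (dl : B ⟶ A ⊗ B) (dr : B ⟶ B ⊗ A),
      IsBicomodule A (S.δ A) (S.ε A) B dl dr →
        PhiL S A B (Psi S A B dl dr) = dl ∧ PhiR S A B (Psi S A B dl dr) = dr) := by
  refine ⟨fun r => S.hom_ext ?_ ?_, fun dl dr hbi => ?_⟩
  · rw [Psi_fst, PhiL_fst]
  · rw [Psi_snd, PhiL_snd, Category.id_comp, PhiR_snd]
  obtain ⟨-, hl, -, hr, -⟩ := hbi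
  change dl ≫ S.snd A B = 𝟙 B at hl
  change dr ≫ S.fst B A = 𝟙 B at hr
  exact ⟨S.hom_ext (by rw [PhiL_fst, Psi_fst]) (by rw [PhiL_snd, hl]),
    S.hom_ext (by rw [PhiR_fst, hr]) (by rw [PhiR_snd, Psi_snd, hl, Category.id_comp])⟩
end

section
/- For relations r : B → A ⊗ A and s : E → A ⊗ A in a C-category, the relation corresponding (via the isomorphism Φ/Ψ between relations and bicomodules) to the product bicomodule Φ(r) ⊠ Φ(s) is r ⊡ s = (γ_A ⊗ β_A) ∘ ((1_A ⊗ ε_A) ⊗ (ε_A ⊗ 1_A)) ∘ (r ⊗ s) : B ⊗ E → A ⊗ A, i.e., Φ(r ⊡ s) = Φ(r) ⊠ Φ(s). -/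
open CategoryTheory MonoidalCategory

variable {C : Type*} [Category C] [MonoidalCategory C] [SymmetricCategory C]

/-- The product of relations
`r ⊡ s = (γ_A ⊗ β_A) ∘ ((1_A ⊗ ε_A) ⊗ (ε_A ⊗ 1_A)) ∘ (r ⊗ s) : B ⊗ E ⟶ A ⊗ A`. -/
def boxdot (S : CStructure C) (A B E : C) (r : B ⟶ A ⊗ A) (s : E ⟶ A ⊗ A) :
    B ⊗ E ⟶ A ⊗ A :=
  (r ⊗ₘ s) ≫ ((A ◁ S.ε A) ⊗ₘ (S.ε A ▷ A)) ≫ ((ρ_ A).hom ⊗ₘ (λ_ A).hom)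

/-!
Write `fst = ρ ∘ (1 ⊗ ε)` and `snd = λ ∘ (ε ⊗ 1)` for the counit projections. Then
`Φ(r)^l = (r₁ ⊗ 1) ∘ δ` with `r₁ = fst ∘ r`, dually `Φ(s)^r = (1 ⊗ s₂) ∘ δ` with `s₂ = snd ∘ s`,
and `r ⊡ s = r₁ ⊗ s₂`. Naturality of `ε` gives `fst ∘ (r ⊡ s) = r₁ ∘ fst`, so
`Φ(r ⊡ s)^l = (r₁ ⊗ 1) ∘ (fst ⊗ 1) ∘ δ_{B ⊗ E}`. In `δ_{B ⊗ E}` the braiding only exchanges the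
middle factors, and once one of them is discarded by `ε` it braids with the unit, which is
trivial; so `(fst ⊗ 1) ∘ δ_{B ⊗ E} = δ_B ⊗ 1_E` by the counit law, and dually for `snd`.
-/

namespace CStructure

variable (S : CStructure C)

lemma tensorHom_comp_fst {X Y X' Y' : C} (f : X ⟶ X') (g : Y ⟶ Y') :
    (f ⊗ₘ g) ≫ S.fst X' Y' = S.fst X Y ≫ f := by
  rw [fst, tensorHom_comp_whiskerLeft_assoc, S.ε_natural, tensorHom_def'_assoc]
  simp [fst]

lemma tensorHom_comp_snd {X Y X' Y' : C} (f : X ⟶ X') (g : Y ⟶ Y') :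
    (f ⊗ₘ g) ≫ S.snd X' Y' = S.snd X Y ≫ g := by
  rw [snd, tensorHom_comp_whiskerRight_assoc, S.ε_natural, MonoidalCategory.tensorHom_def_assoc]
  simp [snd]

lemma δ_comp_ε_whiskerRight (X : C) : S.δ X ≫ (S.ε X ▷ X) = (λ_ X).inv := by
  rw [← cancel_mono (λ_ X).hom, Category.assoc, S.counit_left X, Iso.inv_hom_id]

lemma δ_comp_whiskerLeft_ε (X : C) : S.δ X ≫ (X ◁ S.ε X) = (ρ_ X).inv := by
  rw [← cancel_mono (ρ_ X).hom, Category.assoc, S.counit_right X, Iso.inv_hom_id]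

lemma whiskerLeft_δ_braiding_ε_whiskerRight (X Y : C) :
    (X ◁ S.δ Y) ≫ (α_ X Y Y).inv ≫ ((β_ X Y).hom ▷ Y) ≫ ((S.ε Y ▷ X) ▷ Y)
      = (λ_ X).inv ▷ Y := by
  rw [← comp_whiskerRight,
    ← BraidedCategory.braiding_naturality_right, braiding_tensorUnit_right, comp_whiskerRight,
    ← associator_inv_naturality_middle_assoc, ← whiskerLeft_comp_assoc,
    δ_comp_ε_whiskerRight]
  monoidal

lemma whiskerLeft_δ_braiding_whiskerLeft_snd (X Y : C) :
    (X ◁ S.δ Y) ≫ (α_ X Y Y).inv ≫ ((β_ X Y).hom ▷ Y) ≫ (α_ Y X Y).hom ≫ (Y ◁ S.snd X Y)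
      = S.snd X Y ≫ S.δ Y := by
  rw [snd, whiskerLeft_comp, ← associator_naturality_middle_assoc, ← comp_whiskerRight_assoc,
    ← BraidedCategory.braiding_naturality_left, braiding_tensorUnit_left, comp_whiskerRight,
    comp_whiskerRight, Category.assoc, ← associator_inv_naturality_left_assoc,
    whisker_exchange_assoc]
  monoidal

lemma δ_tensor_comp_fst_whiskerRight (X Y : C) :
    S.δ (X ⊗ Y) ≫ (S.fst X Y ▷ (X ⊗ Y)) = (S.δ X ▷ Y) ≫ (α_ X X Y).hom := by
  calc _ = (S.δ X ▷ Y) ≫ (α_ X X Y).hom ≫ X ◁ ((X ◁ S.δ Y) ≫ (α_ X Y Y).inv ≫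
          ((β_ X Y).hom ▷ Y) ≫ ((S.ε Y ▷ X) ▷ Y) ≫ ((λ_ X).hom ▷ Y)) := by
        simp [S.δ_tensor, fst, MonoidalCategory.tensorHom_def]
    _ = (S.δ X ▷ Y) ≫ (α_ X X Y).hom := by
        rw [reassoc_of% (S.whiskerLeft_δ_braiding_ε_whiskerRight X Y)]
        simp

lemma δ_tensor_comp_whiskerLeft_snd (X Y : C) :
    S.δ (X ⊗ Y) ≫ ((X ⊗ Y) ◁ S.snd X Y) = (X ◁ S.δ Y) ≫ (α_ X Y Y).inv := by
  calc _ = (S.δ X ▷ Y) ≫ (α_ X X Y).hom ≫ X ◁ ((X ◁ S.δ Y) ≫ (α_ X Y Y).inv ≫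
          ((β_ X Y).hom ▷ Y) ≫ (α_ Y X Y).hom ≫ (Y ◁ S.snd X Y)) ≫ (α_ X Y Y).inv := by
        simp [S.δ_tensor, MonoidalCategory.tensorHom_def]
    _ = (X ◁ S.δ Y) ≫ (α_ X Y Y).inv := by
        rw [whiskerLeft_δ_braiding_whiskerLeft_snd]
        simp only [snd, whiskerLeft_comp, Category.assoc]
        rw [← associator_naturality_middle_assoc, ← comp_whiskerRight_assoc,
          δ_comp_whiskerLeft_ε]
        monoidal

end CStructure

lemma PhiL_eq_δ_comp_whiskerRight (S : CStructure C) (A B : C) (r : B ⟶ A ⊗ A) :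
    PhiL S A B r = S.δ B ≫ ((r ≫ S.fst A A) ▷ B) := by
  simp [PhiL, CStructure.fst]

lemma PhiR_eq_δ_comp_whiskerLeft (S : CStructure C) (A B : C) (r : B ⟶ A ⊗ A) :
    PhiR S A B r = S.δ B ≫ (B ◁ (r ≫ S.snd A A)) := by
  simp [PhiR, CStructure.snd]

lemma boxdot_eq_tensorHom (S : CStructure C) (A B E : C) (r : B ⟶ A ⊗ A) (s : E ⟶ A ⊗ A) :
    boxdot S A B E r s = (r ≫ S.fst A A) ⊗ₘ (s ≫ S.snd A A) := by
  rw [boxdot, tensorHom_comp_tensorHom_assoc, tensorHom_comp_tensorHom, CStructure.fst,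
    CStructure.snd]
  simp

/-- For relations `r : B ⟶ A ⊗ A` and `s : E ⟶ A ⊗ A` in a C-category, the relation
corresponding to the product bicomodule is `r ⊡ s`: `Φ(r ⊡ s) = Φ(r) ⊠ Φ(s)`,
i.e. the coactions induced by `r ⊡ s` on `B ⊗ E` agree with the product coactions
`α⁻¹_{A,B,E} ∘ (Φ(r)^l ⊗ 1_E)` and `α_{B,E,A} ∘ (1_B ⊗ Φ(s)^r)`. -/
theorem phi_boxdot (S : CStructure C) (A B E : C) (r : B ⟶ A ⊗ A) (s : E ⟶ A ⊗ A) :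
    (PhiL S A (B ⊗ E) (boxdot S A B E r s)
        = (PhiL S A B r ▷ E) ≫ (α_ A B E).hom) ∧
    (PhiR S A (B ⊗ E) (boxdot S A B E r s)
        = (B ◁ PhiR S A E s) ≫ (α_ B E A).inv) := by
  constructor
  · calc _ = S.δ (B ⊗ E) ≫ (S.fst B E ▷ (B ⊗ E)) ≫ ((r ≫ S.fst A A) ▷ (B ⊗ E)) := by
          rw [PhiL_eq_δ_comp_whiskerRight, boxdot_eq_tensorHom, S.tensorHom_comp_fst,
            comp_whiskerRight]
      _ = _ := by
          rw [reassoc_of% (S.δ_tensor_comp_fst_whiskerRight B E), PhiL_eq_δ_comp_whiskerRight]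
          simp
  · calc _ = S.δ (B ⊗ E) ≫ ((B ⊗ E) ◁ S.snd B E) ≫ ((B ⊗ E) ◁ (s ≫ S.snd A A)) := by
          rw [PhiR_eq_δ_comp_whiskerLeft, boxdot_eq_tensorHom, S.tensorHom_comp_snd,
            whiskerLeft_comp]
      _ = _ := by
          rw [reassoc_of% (S.δ_tensor_comp_whiskerLeft_snd B E), PhiR_eq_δ_comp_whiskerLeft]
          simp
end

section
/- In Set (as a C-category with the diagonal comonoid structures), the ⊠-product of A-A bicomodules has no neutral object: there is no bicomodule ω such that δ ⊠ ω ≅ δ naturally for all bicomodules δ. In particular, any candidate unit must have underlying set a singleton, and for a bicomodule on a set B with injective structure map f : B → A the existence of an isomorphism h : B × S → B of bicomodules forces |S| = 1, while a non-constant f on a set with more than one point leads to a contradiction. -/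
/-- In `Set` (as a C-category with the diagonal comonoid structures), the `⊠`-product
of `A-A` bicomodules has no neutral object, provided `A` has at least two elements.
An `A-A` bicomodule in `Set` is a pair of maps `f g : B → A` (the coactions are
`x ↦ (f x, x)` and `x ↦ (x, g x)`), the product of `(B, f, g)` with `(S, p, q)` is
`(B × S, f ∘ fst, q ∘ snd)`, and a bicomodule isomorphism `h : B × S → B` is a
bijection with `f (h (x, s)) = f x` and `g (h (x, s)) = q s`.  Moreover, for a
bicomodule with injective structure map `f : B → A` (with `B` nonempty), any such
isomorphism forces the underlying set `S` of the candidate unit to be a singleton. -/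
theorem set_boxtimes_no_unit (A : Type) [Nontrivial A] :
    (¬ ∃ (S : Type) (p q : S → A),
      ∀ (B : Type) (f g : B → A), ∃ h : B × S → B,
        Function.Bijective h ∧ (∀ x s, f (h (x, s)) = f x) ∧
          (∀ x s, g (h (x, s)) = q s)) ∧
    (∀ (S : Type) (B : Type) (f g : B → A), Function.Injective f → Nonempty B →
      ∀ h : B × S → B, Function.Bijective h → (∀ x s, f (h (x, s)) = f x) →
        ∀ s s' : S, s = s') := by
  constructor
  · rintro ⟨S, p, q, hU⟩
    obtain ⟨h, hbij, hf, hg⟩ := hU A id id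
    have hx : ∀ x s, h (x, s) = x := fun x s => hf x s
    obtain ⟨a, b, hab⟩ := exists_pair_ne A
    -- S is nonempty by surjectivity of h
    obtain ⟨⟨x0, s0⟩, -⟩ := hbij.2 a
    have ha : q s0 = a := by have := hg a s0; rw [hx] at this; exact this.symm
    have hb : q s0 = b := by have := hg b s0; rw [hx] at this; exact this.symm
    exact hab (ha ▸ hb)
  · rintro S B f g hf ⟨b⟩ h hbij hcomm s s'
    have h1 : h (b, s) = b := hf (hcomm b s)
    have h2 : h (b, s') = b := hf (hcomm b s')
    have := hbij.1 (h1.trans h2.symm)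
    exact (Prod.mk.injEq .. ▸ this).2
end
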